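/- arXiv:2011.13418 — 6 statements merged into one kernel-verified Lean document; each statement's English description precedes it below -/
import Mathlib

section
/- Let X be a measurable space, let U ⊆ ℝⁿ be an open connected set, and let φ : U → P(X) be a map such that for every measurable set A ⊆ X the real-valued function u ↦ φ(u)(A) is continuous on U (as holds whenever the composition of φ with the inclusion into the Banach space of finite signed measures with the total variation norm is a weak C¹-map). Then there exists a probability measure μ₀ on X such that φ(u) is absolutely continuous with respect to μ₀ for every u ∈ U. -/
open MeasureTheory Set
open scoped ENNReal

/-- If `φ` maps an open connected domain `U ⊆ ℝⁿ` into the probability measures on a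
measurable space `X`, setwise continuously (i.e. `u ↦ φ u A` is continuous on `U` for every
measurable `A`), then there is a single probability measure `μ₀` dominating all `φ u`, `u ∈ U`. -/
theorem dominating_measure_of_setwise_continuous
    {X : Type*} [MeasurableSpace X] {n : ℕ}
    (U : Set (EuclideanSpace ℝ (Fin n))) (hUopen : IsOpen U) (hUconn : IsConnected U)
    (φ : EuclideanSpace ℝ (Fin n) → Measure X)
    (hprob : ∀ u ∈ U, IsProbabilityMeasure (φ u))
    (hcont : ∀ A : Set X, MeasurableSet A →
      ContinuousOn (fun u => ((φ u) A).toReal) U) :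
    ∃ μ₀ : Measure X, IsProbabilityMeasure μ₀ ∧ ∀ u ∈ U, φ u ≪ μ₀ := by
  -- countable dense subset of U
  obtain ⟨s, hscount, hsdense⟩ := TopologicalSpace.exists_countable_dense (↥U)
  set D : Set (EuclideanSpace ℝ (Fin n)) := Subtype.val '' s with hD
  have hDU : D ⊆ U := by rintro x ⟨y, _, rfl⟩; exact y.2
  have hUD : ∀ u ∈ U, u ∈ closure D := by
    intro u hu
    have h1 : (⟨u, hu⟩ : ↥U) ∈ closure s := hsdense _
    have := image_closure_subset_closure_image (f := (Subtype.val : ↥U → _))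
      continuous_subtype_val (s := s)
    exact this ⟨⟨u, hu⟩, h1, rfl⟩
  obtain ⟨u₀, hu₀⟩ := hUconn.nonempty
  have hDne : D.Nonempty := by
    by_contra h
    rw [Set.not_nonempty_iff_eq_empty] at h
    have := hUD u₀ hu₀
    simp [h] at this
  obtain ⟨f, hf⟩ := (hscount.image Subtype.val).exists_eq_range hDne
  have hfU : ∀ k, f k ∈ U := fun k => hDU (by rw [hD, hf]; exact Set.mem_range_self k)
  haveI : ∀ k, IsProbabilityMeasure (φ (f k)) := fun k => hprob _ (hfU k)
  refine ⟨Measure.sum (fun k => ((2 : ℝ≥0∞)⁻¹) ^ (k + 1) • φ (f k)), ?_, ?_⟩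
  · constructor
    rw [Measure.sum_apply _ MeasurableSet.univ]
    have : ∀ k : ℕ, (((2 : ℝ≥0∞)⁻¹) ^ (k + 1) • φ (f k)) Set.univ
        = ((2 : ℝ≥0∞)⁻¹) ^ (k + 1) := by
      intro k
      simp [Measure.smul_apply, measure_univ]
    rw [tsum_congr this]
    have : ∑' k : ℕ, ((2 : ℝ≥0∞)⁻¹) ^ (k + 1)
        = (2 : ℝ≥0∞)⁻¹ * ∑' k : ℕ, ((2 : ℝ≥0∞)⁻¹) ^ k := by
      rw [← ENNReal.tsum_mul_left]
      exact tsum_congr fun k => by ring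
    rw [this, ENNReal.tsum_geometric, ENNReal.one_sub_inv_two, inv_inv]
    exact ENNReal.inv_mul_cancel two_ne_zero ENNReal.ofNat_ne_top
  · intro u hu
    refine Measure.AbsolutelyContinuous.mk ?_
    intro A hA hA0
    rw [Measure.sum_apply _ hA] at hA0
    have hzero : ∀ k, φ (f k) A = 0 := by
      intro k
      have hterm := (ENNReal.tsum_eq_zero.mp hA0) k
      rw [Measure.smul_apply, smul_eq_mul, mul_eq_zero] at hterm
      rcases hterm with h | h
      · simp at h
      · exact h
    haveI := hprob u hu
    -- the continuous function u ↦ (φ u A).toReal vanishes on D, dense in U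
    have hgD : ∀ x ∈ D, ((φ x) A).toReal = 0 := by
      intro x hx
      rw [hD, hf] at hx
      obtain ⟨k, rfl⟩ := hx
      simp [hzero k]
    have hca : ContinuousAt (fun u => ((φ u) A).toReal) u :=
      (hcont A hA).continuousAt (hUopen.mem_nhds hu)
    have hne : (nhdsWithin u D).NeBot := mem_closure_iff_nhdsWithin_neBot.mp (hUD u hu)
    have h1 : Filter.Tendsto (fun u => ((φ u) A).toReal) (nhdsWithin u D)
        (nhds (((φ u) A).toReal)) := hca.continuousWithinAt.tendsto
    have h2 : Filter.Tendsto (fun u => ((φ u) A).toReal) (nhdsWithin u D) (nhds 0) := by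
      refine Filter.Tendsto.congr' ?_ tendsto_const_nhds
      filter_upwards [self_mem_nhdsWithin] with x hx
      exact (hgD x hx).symm
    have h0 : ((φ u) A).toReal = 0 := tendsto_nhds_unique h1 h2
    have hfin : (φ u) A ≠ ⊤ := (measure_lt_top _ _).ne
    exact (ENNReal.toReal_eq_zero_iff _).mp h0 |>.resolve_right hfin
end

section
/- Let X be a measurable space, ε > 0, and let c : (−ε, ε) → P(X) be a map. Suppose v is a finite signed measure on X such that for every measurable set A ⊆ X the function t ↦ c(t)(A) is differentiable at t = 0 with derivative v(A). Then v is absolutely continuous with respect to c(0), i.e., every c(0)-null measurable set is v-null. -/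
open MeasureTheory Set

/-- If `c : (-ε, ε) → P(X)` is a curve of probability measures whose setwise derivative at
`t = 0` is the finite signed measure `v` (i.e. for every measurable `A` the function
`t ↦ c t A` is differentiable at `0` with derivative `v A`), then `v` is absolutely
continuous with respect to `c 0`: every `c 0`-null measurable set is `v`-null. -/
theorem tangent_vector_dominated_by_basepoint
    {X : Type*} [MeasurableSpace X] (ε : ℝ) (hε : 0 < ε)
    (c : ℝ → Measure X) (hprob : ∀ t ∈ Set.Ioo (-ε) ε, IsProbabilityMeasure (c t))
    (v : SignedMeasure X)
    (hderiv : ∀ A : Set X, MeasurableSet A →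
      HasDerivWithinAt (fun t => ((c t) A).toReal) (v A) (Set.Ioo (-ε) ε) 0) :
    ∀ A : Set X, MeasurableSet A → c 0 A = 0 → v A = 0 := by
  intro A hA h0
  have h0mem : (0 : ℝ) ∈ Set.Ioo (-ε) ε := ⟨neg_lt_zero.mpr hε, hε⟩
  have hnhds : Set.Ioo (-ε) ε ∈ nhds (0 : ℝ) :=
    isOpen_Ioo.mem_nhds h0mem
  have hd : HasDerivAt (fun t => ((c t) A).toReal) (v A) 0 :=
    (hderiv A hA).hasDerivAt hnhds
  have hmin : IsLocalMin (fun t => ((c t) A).toReal) 0 := by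
    apply Filter.Eventually.of_forall
    intro t
    simp [h0, ENNReal.toReal_nonneg]
  exact hmin.hasDerivAt_eq_zero hd
end

section
/- Define p : ℝ² → L¹(ℝ, dx) by p(a, b)(x) = ((1 − a) e^{−x²/2} + a e^{−(x−b)²/2}) / √(2π), where dx is the Lebesgue measure on ℝ. Then p is Fréchet differentiable at (a, b) = (0, 0) with Fréchet derivative equal to the zero linear map from ℝ² to L¹(ℝ, dx). -/
/-!
With `φ x = exp (-x ^ 2 / 2)`, the difference `P (a, b) - P (0, 0)` is `a • (φ (· - b) - φ) / √(2π)`,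
so its `L¹` norm is `|a|` times `‖φ (· - b) - φ‖₁ / √(2π)`. Translation is continuous in `L¹`
(here by dominated convergence: for `|b| ≤ 1` the translates are dominated by `e · exp (-x ^ 2 / 4)`),
hence this norm is `|a| · o(1) = o(‖(a, b)‖)`.
-/

open MeasureTheory Real Filter Topology Asymptotics

theorem hasFDerivAt_zero_of_norm_sub_le_mul {𝕜 E F : Type*} [NontriviallyNormedField 𝕜]
    [NormedAddCommGroup E] [NormedSpace 𝕜 E] [NormedAddCommGroup F] [NormedSpace 𝕜 F]
    {P : 𝕜 × E → F} {g : E → ℝ} (hg : Tendsto g (𝓝 0) (𝓝 0))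
    (hP : ∀ a b, ‖P (a, b) - P (0, 0)‖ ≤ ‖a‖ * g b) :
    HasFDerivAt P (0 : 𝕜 × E →L[𝕜] F) (0, 0) := by
  rw [hasFDerivAt_iff_isLittleO_nhds_zero]
  have hg' : (fun h : 𝕜 × E => g h.2) =o[𝓝 0] fun _ => (1 : ℝ) :=
    (isLittleO_one_iff ℝ).2 (hg.comp (continuous_snd.tendsto' 0 0 rfl))
  have hbound : (fun h : 𝕜 × E => ‖h.1‖ * g h.2) =o[𝓝 0] fun h => h := by
    refine isLittleO_norm_right.1 ?_
    simpa using (isBigO_fst_prod' (l := 𝓝 (0 : 𝕜 × E)) (f' := id)).norm_norm.mul_isLittleO hg'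
  refine (isBigO_of_le _ fun h => ?_).trans_isLittleO hbound
  simpa [Prod.mk_zero_zero] using (hP h.1 h.2).trans (le_abs_self _)

theorem tendsto_integral_norm_comp_sub_sub {G E : Type*} [TopologicalSpace G] [AddGroup G]
    [IsTopologicalAddGroup G] [FirstCountableTopology G] [MeasurableSpace G]
    [OpensMeasurableSpace G] [NormedAddCommGroup E] [SecondCountableTopologyEither G E]
    {μ : Measure G} {f : G → E} (hf : Continuous f) {bound : G → ℝ} (hbound : Integrable bound μ)
    (hdom : ∀ᶠ b in 𝓝 0, ∀ x, ‖f (x - b)‖ ≤ bound x) :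
    Tendsto (fun b => ∫ x, ‖f (x - b) - f x‖ ∂μ) (𝓝 0) (𝓝 0) := by
  have hf0 : ∀ x, ‖f x‖ ≤ bound x := by simpa using hdom.self_of_nhds
  have key := tendsto_integral_filter_of_dominated_convergence (μ := μ)
    (F := fun b x => ‖f (x - b) - f x‖) (f := fun _ => 0) (l := 𝓝 0) (fun x => 2 * bound x)
    (Eventually.of_forall fun b => Continuous.aestronglyMeasurable (by fun_prop)) ?_
    (hbound.const_mul 2) ?_
  · simpa using key
  · filter_upwards [hdom] with b hb
    refine Eventually.of_forall fun x => ?_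
    rw [norm_norm]
    linarith [norm_sub_le (f (x - b)) (f x), hb x, hf0 x]
  · refine Eventually.of_forall fun x => ?_
    have hcont : Continuous fun b => ‖f (x - b) - f x‖ := by fun_prop
    simpa using hcont.tendsto 0

theorem exp_neg_sub_sq_div_two_le {x b : ℝ} (hb : |b| ≤ 1) :
    exp (-(x - b) ^ 2 / 2) ≤ exp 1 * exp (-(1 / 4) * x ^ 2) := by
  have hbx : b * x ≤ |x| := calc
    b * x ≤ |b| * |x| := by rw [← abs_mul]; exact le_abs_self _
    _ ≤ |x| := mul_le_of_le_one_left (abs_nonneg x) hb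
  rw [← exp_add]
  gcongr
  -- `x ^ 2 / 4 - b * x + 1 ≥ (|x| / 2 - 1) ^ 2 ≥ 0`
  nlinarith [sq_abs x, sq_nonneg (|x| - 2), sq_nonneg b]

theorem tendsto_integral_abs_exp_neg_sub_sq_sub :
    Tendsto (fun b : ℝ => ∫ x, |exp (-(x - b) ^ 2 / 2) - exp (-x ^ 2 / 2)|) (𝓝 0) (𝓝 0) := by
  have hdom : ∀ᶠ b : ℝ in 𝓝 0, ∀ x, ‖exp (-(x - b) ^ 2 / 2)‖ ≤ exp 1 * exp (-(1 / 4) * x ^ 2) := by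
    filter_upwards [Metric.closedBall_mem_nhds (0 : ℝ) one_pos] with b hb x
    rw [norm_of_nonneg (exp_pos _).le]
    exact exp_neg_sub_sq_div_two_le (by simpa using hb)
  simpa using tendsto_integral_norm_comp_sub_sub (μ := volume)
    (f := fun x => exp (-x ^ 2 / 2)) (by fun_prop)
    ((integrable_exp_neg_mul_sq (by norm_num : (0 : ℝ) < 1 / 4)).const_mul _) hdom

/-- The Gaussian mixture family `p(a, b) = ((1-a) e^{-x²/2} + a e^{-(x-b)²/2})/√(2π)`,
viewed as a map `P : ℝ² → L¹(ℝ, dx)` (i.e. `P (a, b)` is the `L¹`-class of the above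
density), is Fréchet differentiable at `(a, b) = (0, 0)` with Fréchet derivative the zero
linear map `ℝ² → L¹(ℝ, dx)`. -/
theorem gaussian_mixture_frechet_derivative_zero
    (P : ℝ × ℝ → Lp ℝ 1 (volume : Measure ℝ))
    (hP : ∀ ab : ℝ × ℝ, (P ab : ℝ → ℝ) =ᵐ[volume] fun x : ℝ =>
      ((1 - ab.1) * Real.exp (-x ^ 2 / 2) + ab.1 * Real.exp (-(x - ab.2) ^ 2 / 2)) /
        Real.sqrt (2 * π)) :
    HasFDerivAt P (0 : ℝ × ℝ →L[ℝ] Lp ℝ 1 (volume : Measure ℝ)) (0, 0) := by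
  have hC : 0 < √(2 * π) := by positivity
  have hnorm : ∀ a b, ‖P (a, b) - P (0, 0)‖ =
      ‖a‖ * ((∫ x, |exp (-(x - b) ^ 2 / 2) - exp (-x ^ 2 / 2)|) / √(2 * π)) := by
    intro a b
    have hdiff : (fun x => ‖(P (a, b) - P (0, 0) : Lp ℝ 1 volume) x‖) =ᵐ[volume]
        fun x => ‖a‖ / √(2 * π) * |exp (-(x - b) ^ 2 / 2) - exp (-x ^ 2 / 2)| := by
      filter_upwards [Lp.coeFn_sub (P (a, b)) (P (0, 0)), hP (a, b), hP (0, 0)] with x hsub hab h00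
      rw [hsub, Pi.sub_apply, hab, h00, Real.norm_eq_abs, Real.norm_eq_abs, ← sub_div,
        abs_div, abs_of_pos hC, div_mul_eq_mul_div, ← abs_mul]
      congr 2
      ring
    rw [L1.norm_eq_integral_norm, integral_congr_ae hdiff, integral_const_mul]
    ring
  exact hasFDerivAt_zero_of_norm_sub_le_mul
    (by simpa using tendsto_integral_abs_exp_neg_sub_sq_sub.div_const (√(2 * π)))
    fun a b => (hnorm a b).le
end

section
/- Let f : [0, ∞) → ℝ be a smooth function with f(u) > 0 and f′(u) < 0 for u ∈ [0, 1), and f(u) = 0 for u ≥ 1. For t with 0 < |t| < 1 define p_t : (−1, 1) → ℝ by p_t(x) = 1 for x ≤ 0 and p_t(x) = |t| f(x/|t|)² for x > 0, and define p_0(x) = 1 for x ≤ 0 and p_0(x) = 0 for x > 0. Then ∫_{−1}^{1} |p_t(x) − p_0(x)| dx = t² ∫₀¹ f(u)² du for all 0 < |t| < 1; consequently the map t ↦ p_t from (−1, 1) to L¹((−1, 1), dx) is differentiable at t = 0 with derivative 0. -/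
open MeasureTheory Real Filter Topology

/-- For a smooth `f : [0, ∞) → ℝ` with `f > 0`, `f′ < 0` on `[0, 1)` and `f = 0` on
`[1, ∞)`, consider `p_t(x) = 1` for `x ≤ 0` and `p_t(x) = |t| f(x/|t|)²` for `x > 0`
(note that this single formula also yields `p_0(x) = 0` for `x > 0` with Lean's
conventions). Then `∫_{-1}^{1} |p_t(x) - p_0(x)| dx = t² ∫₀¹ f(u)² du` for `0 < |t| < 1`;
consequently the curve `t ↦ p_t` in `L¹((-1,1))` is differentiable at `t = 0` with
derivative `0`, i.e. `‖p_t - p_0‖_{L¹} / |t| → 0` as `t → 0`. -/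
theorem tv_norm_of_AJLS_example
    (f : ℝ → ℝ) (hf : ContDiffOn ℝ (⊤ : ℕ∞) f (Set.Ici 0))
    (hpos : ∀ u ∈ Set.Ico (0:ℝ) 1, 0 < f u)
    (hdecr : ∀ u ∈ Set.Ico (0:ℝ) 1, deriv f u < 0)
    (hzero : ∀ u : ℝ, 1 ≤ u → f u = 0)
    (p : ℝ → ℝ → ℝ)
    (hp : ∀ t x, p t x = if x ≤ 0 then 1 else |t| * (f (x / |t|)) ^ 2) :
    (∀ t : ℝ, 0 < |t| → |t| < 1 →
      ∫ x in Set.Ioo (-1:ℝ) 1, |p t x - p 0 x|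
        = t ^ 2 * ∫ u in (0:ℝ)..1, (f u) ^ 2) ∧
    Tendsto (fun t : ℝ => (∫ x in Set.Ioo (-1:ℝ) 1, |p t x - p 0 x|) / |t|)
      (𝓝[≠] 0) (𝓝 0) := by
  have hfc : ContinuousOn (fun u => (f u) ^ 2) (Set.Ici 0) :=
    (hf.continuousOn).pow 2
  have hint : ∀ a b : ℝ, 0 ≤ a → 0 ≤ b →
      IntervalIntegrable (fun u => (f u) ^ 2) volume a b := by
    intro a b ha hb
    apply ContinuousOn.intervalIntegrable
    exact hfc.mono (fun x hx => le_trans (le_inf ha hb) hx.1)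
  have key : ∀ t : ℝ, 0 < |t| → |t| < 1 →
      ∫ x in Set.Ioo (-1:ℝ) 1, |p t x - p 0 x| = t ^ 2 * ∫ u in (0:ℝ)..1, (f u) ^ 2 := by
    intro t ht ht1
    have htne : |t| ≠ 0 := ne_of_gt ht
    have hcongr : Set.EqOn (fun x => |p t x - p 0 x|)
        ((Set.Ioo (0:ℝ) 1).indicator (fun x => |t| * (f (x / |t|)) ^ 2))
        (Set.Ioo (-1:ℝ) 1) := by
      intro x hx
      simp only [hp]
      by_cases hx0 : x ≤ 0
      · have : x ∉ Set.Ioo (0:ℝ) 1 := fun h => absurd h.1 (not_lt.mpr hx0)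
        simp [hx0, Set.indicator_of_notMem this]
      · push_neg at hx0
        have hmem : x ∈ Set.Ioo (0:ℝ) 1 := ⟨hx0, hx.2⟩
        simp only [if_neg (not_le.mpr hx0), Set.indicator_of_mem hmem, abs_zero, zero_mul,
          sub_zero]
        exact abs_of_nonneg (mul_nonneg (abs_nonneg t) (sq_nonneg _))
    rw [setIntegral_congr_fun measurableSet_Ioo hcongr,
      setIntegral_indicator measurableSet_Ioo]
    have hinter : Set.Ioo (-1:ℝ) 1 ∩ Set.Ioo (0:ℝ) 1 = Set.Ioo (0:ℝ) 1 := by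
      apply Set.inter_eq_right.mpr
      exact Set.Ioo_subset_Ioo (by norm_num) le_rfl
    rw [hinter]
    have h01 : (0:ℝ) ≤ 1 := by norm_num
    have : ∫ x in Set.Ioo (0:ℝ) 1, |t| * (f (x / |t|)) ^ 2
        = ∫ x in (0:ℝ)..1, |t| * (f (x / |t|)) ^ 2 := by
      rw [intervalIntegral.integral_of_le h01, ← MeasureTheory.integral_Ioc_eq_integral_Ioo]
    rw [this, intervalIntegral.integral_const_mul,
      intervalIntegral.integral_comp_div (fun u => (f u) ^ 2) htne]
    have h1t : (1:ℝ) ≤ 1 / |t| := (one_le_div ht).mpr (le_of_lt ht1)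
    have hzero' : ∫ u in (1:ℝ)..(1 / |t|), (f u) ^ 2 = 0 := by
      rw [intervalIntegral.integral_congr (g := fun _ => (0:ℝ)), intervalIntegral.integral_zero]
      intro u hu
      rw [Set.uIcc_of_le h1t] at hu
      simp [hzero u hu.1]
    have hsplit : ∫ u in (0:ℝ)..(1 / |t|), (f u) ^ 2
        = (∫ u in (0:ℝ)..1, (f u) ^ 2) + ∫ u in (1:ℝ)..(1 / |t|), (f u) ^ 2 :=
      (intervalIntegral.integral_add_adjacent_intervals
        (hint 0 1 le_rfl h01) (hint 1 (1 / |t|) h01 (by positivity))).symm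
    have h0div : (0:ℝ) / |t| = 0 := zero_div _
    have h1div : (1:ℝ) / |t| = 1 / |t| := rfl
    rw [h0div, hsplit, hzero', add_zero, smul_eq_mul, ← mul_assoc, ← sq_abs t, sq]
  refine ⟨key, ?_⟩
  have habs : Tendsto (fun t : ℝ => |t|) (𝓝[≠] (0:ℝ)) (𝓝 0) := by
    have : Tendsto (fun t : ℝ => |t|) (𝓝 (0:ℝ)) (𝓝 |0|) := continuous_abs.tendsto 0
    simpa using this.mono_left nhdsWithin_le_nhds
  have hev : ∀ᶠ t in 𝓝[≠] (0:ℝ),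
      (∫ x in Set.Ioo (-1:ℝ) 1, |p t x - p 0 x|) / |t|
        = |t| * ∫ u in (0:ℝ)..1, (f u) ^ 2 := by
    have hlt : ∀ᶠ t in 𝓝[≠] (0:ℝ), |t| < 1 := habs.eventually_lt_const one_pos
    filter_upwards [hlt, self_mem_nhdsWithin] with t ht1 htne
    have ht : 0 < |t| := abs_pos.mpr htne
    rw [key t ht ht1, ← sq_abs t, sq]
    field_simp
  have hlim : Tendsto (fun t : ℝ => |t| * ∫ u in (0:ℝ)..1, (f u) ^ 2)
      (𝓝[≠] (0:ℝ)) (𝓝 0) := by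
    have := habs.mul_const (∫ u in (0:ℝ)..1, (f u) ^ 2)
    simpa using this
  exact hlim.congr' (hev.mono fun t h => h.symm)
end

section
/- Let X be a measurable space with a σ-finite measure λ, let a < b, and let t ↦ ρ_t be a continuously differentiable curve from [a, b] into L¹(X, λ) (differentiability in the L¹-norm), such that for each t one has ρ_t ≥ 0 λ-a.e. and ∫_X ρ_t dλ = 1. Assume that for each t ∈ [a, b] there is a measurable function h_t with ρ̇_t = h_t ρ_t λ-a.e. and ∫_X h_t² ρ_t dλ < ∞, where ρ̇_t denotes the L¹-derivative of the curve at t. Then ∫_X |ρ_b − ρ_a| dλ ≤ ∫_a^b ( ∫_X h_t² ρ_t dλ )^{1/2} dt. -/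
/-!
The fundamental theorem of calculus in `L¹` bounds `‖ρ_b - ρ_a‖₁` by `∫_a^b ‖ρ̇_t‖₁ dt`. At each
time, `‖ρ̇_t‖₁ = ∫ |h_t| √ρ_t · √ρ_t`, and Cauchy–Schwarz against `√ρ_t`, whose `L²` norm is `1`,
bounds this by `(∫ h_t² ρ_t)^{1/2}`.
-/

open MeasureTheory Set

theorem enorm_sub_le_lintegral_enorm_of_hasDerivWithinAt {E : Type*} [NormedAddCommGroup E]
    [NormedSpace ℝ E] [CompleteSpace E] {f f' : ℝ → E} {a b : ℝ} (hab : a ≤ b)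
    (hf : ∀ t ∈ Icc a b, HasDerivWithinAt f (f' t) (Icc a b) t)
    (hf' : ContinuousOn f' (Icc a b)) :
    ‖f b - f a‖ₑ ≤ ∫⁻ t in Icc a b, ‖f' t‖ₑ := by
  have hf_right : ∀ t ∈ Ioo a b, HasDerivWithinAt f (f' t) (Ioi t) t := fun t ht =>
    ((hf t (Ioo_subset_Icc_self ht)).hasDerivAt (Icc_mem_nhds ht.1 ht.2)).hasDerivWithinAt
  have hftc : ∫ t in a..b, f' t = f b - f a :=
    intervalIntegral.integral_eq_sub_of_hasDeriv_right_of_le hab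
      (fun t ht => (hf t ht).continuousWithinAt) hf_right
      (hf'.intervalIntegrable_of_Icc hab)
  rw [← hftc, intervalIntegral.integral_of_le hab, restrict_Ioc_eq_restrict_Icc]
  exact enorm_integral_le_lintegral_enorm _

section

variable {X : Type*} [MeasurableSpace X] {μ : Measure X}

theorem integral_abs_mul_le_sqrt_integral_sq_mul {f u : X → ℝ} (hu : 0 ≤ᵐ[μ] u)
    (hu_int : Integrable u μ) (hf : AEStronglyMeasurable f μ)
    (hfu : Integrable (fun x => f x ^ 2 * u x) μ) :
    ∫ x, |f x| * u x ∂μ ≤ √(∫ x, f x ^ 2 * u x ∂μ) * √(∫ x, u x ∂μ) := by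
  have hsq : ∀ᵐ x ∂μ, √(u x) ^ 2 = u x := hu.mono fun x hx => Real.sq_sqrt hx
  have hsqrt_meas : AEStronglyMeasurable (fun x => √(u x)) μ :=
    Real.continuous_sqrt.comp_aestronglyMeasurable hu_int.1
  have hF : MemLp (fun x => |f x| * √(u x)) (ENNReal.ofReal 2) μ := by
    rw [ENNReal.ofReal_ofNat, memLp_two_iff_integrable_sq (by fun_prop)]
    refine hfu.congr ?_
    filter_upwards [hsq] with x hx
    rw [mul_pow, sq_abs, hx]
  have hG : MemLp (fun x => √(u x)) (ENNReal.ofReal 2) μ := by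
    rw [ENNReal.ofReal_ofNat, memLp_two_iff_integrable_sq hsqrt_meas]
    exact hu_int.congr (hsq.mono fun x hx => hx.symm)
  have holder := integral_mul_le_Lp_mul_Lq_of_nonneg Real.HolderConjugate.two_two
    (.of_forall fun x => by positivity) (.of_forall fun x => by positivity) hF hG
  simp only [Real.rpow_two, ← Real.sqrt_eq_rpow] at holder
  calc ∫ x, |f x| * u x ∂μ = ∫ x, |f x| * √(u x) * √(u x) ∂μ :=
        integral_congr_ae (hsq.mono fun x hx => by dsimp only; rw [mul_assoc, ← sq, hx])
    _ ≤ √(∫ x, (|f x| * √(u x)) ^ 2 ∂μ) * √(∫ x, √(u x) ^ 2 ∂μ) := holder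
    _ = √(∫ x, f x ^ 2 * u x ∂μ) * √(∫ x, u x ∂μ) := by
        rw [integral_congr_ae (hsq.mono fun x hx => by rw [mul_pow, sq_abs, hx]),
          integral_congr_ae hsq]

theorem L1.norm_le_sqrt_integral_sq_mul_of_ae_eq_mul (u v : Lp ℝ 1 μ) (hu : 0 ≤ᵐ[μ] (u : X → ℝ))
    (hu_one : ∫ x, (u : X → ℝ) x ∂μ = 1) {h : X → ℝ} (hh : AEStronglyMeasurable h μ)
    (hv : (v : X → ℝ) =ᵐ[μ] fun x => h x * (u : X → ℝ) x)
    (hhu : Integrable (fun x => h x ^ 2 * (u : X → ℝ) x) μ) :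
    ‖v‖ ≤ √(∫ x, h x ^ 2 * (u : X → ℝ) x ∂μ) := by
  calc ‖v‖ = ∫ x, |h x| * (u : X → ℝ) x ∂μ := by
        rw [L1.norm_eq_integral_norm]
        refine integral_congr_ae ?_
        filter_upwards [hv, hu] with x hvx hux
        rw [hvx, Real.norm_eq_abs, abs_mul, abs_of_nonneg hux]
    _ ≤ √(∫ x, h x ^ 2 * (u : X → ℝ) x ∂μ) * √(∫ x, (u : X → ℝ) x ∂μ) :=
        integral_abs_mul_le_sqrt_integral_sq_mul hu (L1.integrable_coeFn u) hh hhu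
    _ = √(∫ x, h x ^ 2 * (u : X → ℝ) x ∂μ) := by rw [hu_one, Real.sqrt_one, mul_one]

end

theorem tv_distance_le_fisher_length_general
    {X : Type*} [MeasurableSpace X] (μ : Measure X)
    (a b : ℝ) (hab : a < b)
    (ρ ρ' : ℝ → Lp ℝ 1 μ)
    (hderiv : ∀ t ∈ Set.Icc a b, HasDerivWithinAt ρ (ρ' t) (Set.Icc a b) t)
    (hcont : ContinuousOn ρ' (Set.Icc a b))
    (hpos : ∀ t ∈ Set.Icc a b, 0 ≤ᵐ[μ] (ρ t : X → ℝ))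
    (hone : ∀ t ∈ Set.Icc a b, ∫ x, (ρ t : X → ℝ) x ∂μ = 1)
    (h : ℝ → X → ℝ) (hmeas : ∀ t, Measurable (h t))
    (hlog : ∀ t ∈ Set.Icc a b,
      (ρ' t : X → ℝ) =ᵐ[μ] fun x => h t x * (ρ t : X → ℝ) x)
    (hfin : ∀ t ∈ Set.Icc a b,
      Integrable (fun x => (h t x) ^ 2 * (ρ t : X → ℝ) x) μ) :
    ENNReal.ofReal (∫ x, |(ρ b : X → ℝ) x - (ρ a : X → ℝ) x| ∂μ)
      ≤ ∫⁻ t in Set.Icc a b,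
          ENNReal.ofReal (Real.sqrt (∫ x, (h t x) ^ 2 * (ρ t : X → ℝ) x ∂μ)) := by
  have htv : ∫ x, |(ρ b : X → ℝ) x - (ρ a : X → ℝ) x| ∂μ = dist (ρ b) (ρ a) := by
    simp only [L1.dist_eq_integral_dist, Real.dist_eq]
  calc ENNReal.ofReal (∫ x, |(ρ b : X → ℝ) x - (ρ a : X → ℝ) x| ∂μ)
      = ‖ρ b - ρ a‖ₑ := by rw [htv, ← edist_dist, edist_eq_enorm_sub]
    _ ≤ ∫⁻ t in Icc a b, ‖ρ' t‖ₑ :=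
        enorm_sub_le_lintegral_enorm_of_hasDerivWithinAt hab.le hderiv hcont
    _ ≤ _ := by
        refine setLIntegral_mono' measurableSet_Icc fun t ht => ?_
        rw [← ofReal_norm]
        exact ENNReal.ofReal_le_ofReal <| L1.norm_le_sqrt_integral_sq_mul_of_ae_eq_mul _ _
          (hpos t ht) (hone t ht) (hmeas t).aestronglyMeasurable (hlog t ht) (hfin t ht)

/-- Total variation distance is bounded by Fisher length: if `t ↦ ρ_t` is a continuously
differentiable curve `[a, b] → L¹(X, μ)` of probability densities (w.r.t. a σ-finite
measure `μ`), whose `L¹`-derivative `ρ̇_t` has logarithmic representation `h_t` (i.e.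
`ρ̇_t = h_t ρ_t` a.e.) with finite Fisher norm `∫ h_t² ρ_t dμ < ∞`, then
`∫ |ρ_b - ρ_a| dμ ≤ ∫_a^b (∫ h_t² ρ_t dμ)^{1/2} dt`. -/
theorem tv_distance_le_fisher_length
    {X : Type*} [MeasurableSpace X] (μ : Measure X) [SigmaFinite μ]
    (a b : ℝ) (hab : a < b)
    (ρ ρ' : ℝ → Lp ℝ 1 μ)
    (hderiv : ∀ t ∈ Set.Icc a b, HasDerivWithinAt ρ (ρ' t) (Set.Icc a b) t)
    (hcont : ContinuousOn ρ' (Set.Icc a b))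
    (hpos : ∀ t ∈ Set.Icc a b, 0 ≤ᵐ[μ] (ρ t : X → ℝ))
    (hone : ∀ t ∈ Set.Icc a b, ∫ x, (ρ t : X → ℝ) x ∂μ = 1)
    (h : ℝ → X → ℝ) (hmeas : ∀ t, Measurable (h t))
    (hlog : ∀ t ∈ Set.Icc a b,
      (ρ' t : X → ℝ) =ᵐ[μ] fun x => h t x * (ρ t : X → ℝ) x)
    (hfin : ∀ t ∈ Set.Icc a b,
      Integrable (fun x => (h t x) ^ 2 * (ρ t : X → ℝ) x) μ) :
    ENNReal.ofReal (∫ x, |(ρ b : X → ℝ) x - (ρ a : X → ℝ) x| ∂μ)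
      ≤ ∫⁻ t in Set.Icc a b,
          ENNReal.ofReal (Real.sqrt (∫ x, (h t x) ^ 2 * (ρ t : X → ℝ) x ∂μ)) :=
  tv_distance_le_fisher_length_general μ a b hab ρ ρ' hderiv hcont hpos hone h hmeas hlog hfin
end

section
/- Let X and Y be measurable spaces, let κ be a Markov kernel from X to Y, let μ be a probability measure on X, and let h ∈ L²(X, μ). Define the probability measure μ′ on Y by μ′(B) = ∫_X κ(x)(B) dμ(x) and the finite signed measure ν′ on Y by ν′(B) = ∫_X κ(x)(B) h(x) dμ(x). Then ν′ is absolutely continuous with respect to μ′, its Radon–Nikodym derivative g = dν′/dμ′ lies in L²(Y, μ′), and ∫_Y g² dμ′ ≤ ∫_X h² dμ. -/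
/-!
Let `π = μ ⊗ₘ κ` be the joint law on `X × Y`; its marginals are `μ` and `μ' = κ ∘ₘ μ`, and `ν'`
is the image under `Prod.snd` of the signed measure with density `h ∘ Prod.fst` with respect
to `π`. Hence `dν'/dμ' ∘ Prod.snd` is the conditional expectation of `h ∘ Prod.fst` given the
second coordinate, and conditional expectation is an `L²` contraction by conditional Jensen.
-/

open MeasureTheory ProbabilityTheory

namespace MeasureTheory

theorem integral_sq_condExp_le {Ω : Type*} {m m₀ : MeasurableSpace Ω} {π : Measure Ω}
    {H : Ω → ℝ} (hH : MemLp H 2 π) :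
    ∫ ω, (π[H | m] ω) ^ 2 ∂π ≤ ∫ ω, H ω ^ 2 ∂π := by
  simpa [Real.norm_eq_abs, Real.rpow_two, sq_abs] using integral_norm_condExp_rpow_le (m := m)
    one_le_two (hH.integrable_norm_rpow two_ne_zero ENNReal.ofNat_ne_top)

namespace SignedMeasure

variable {Ω Y : Type*} [MeasurableSpace Ω] [MeasurableSpace Y]
  {π : Measure Ω} {f : Ω → Y} {H : Ω → ℝ} {ν : SignedMeasure Y}

theorem absolutelyContinuous_map_of_setIntegral_preimage (hf : Measurable f)
    (hν : ∀ B, MeasurableSet B → ν B = ∫ ω in f ⁻¹' B, H ω ∂π) :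
    ν ≪ᵥ (π.map f).toENNRealVectorMeasure := by
  refine VectorMeasure.AbsolutelyContinuous.mk fun B hB hB0 => ?_
  rw [Measure.toENNRealVectorMeasure_apply_measurable hB, Measure.map_apply hf hB] at hB0
  rw [hν B hB, setIntegral_measure_zero _ hB0]

theorem rnDeriv_map_comp_ae_eq_condExp [IsFiniteMeasure π] (hf : Measurable f)
    (hH : Integrable H π) (hν : ∀ B, MeasurableSet B → ν B = ∫ ω in f ⁻¹' B, H ω ∂π) :
    ν.rnDeriv (π.map f) ∘ f =ᵐ[π] π[H | MeasurableSpace.comap f ‹_›] := by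
  have hac := absolutelyContinuous_map_of_setIntegral_preimage hf hν
  have hg := ν.integrable_rnDeriv (π.map f)
  refine ae_eq_condExp_of_forall_setIntegral_eq hf.comap_le hH
    (fun s _ _ => (hg.comp_measurable hf).integrableOn) ?_
    ((ν.measurable_rnDeriv _).comp (comap_measurable f)).aestronglyMeasurable
  rintro - ⟨B, hB, rfl⟩ -
  simp only [Function.comp_apply]
  rw [← setIntegral_map hB hg.aestronglyMeasurable hf.aemeasurable, ← hν B hB]
  conv_rhs => rw [← ν.withDensityᵥ_rnDeriv_eq (π.map f) hac]
  rw [withDensityᵥ_apply hg hB]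

theorem memLp_rnDeriv_map [IsFiniteMeasure π] (hf : Measurable f)
    (hH : MemLp H 2 π) (hν : ∀ B, MeasurableSet B → ν B = ∫ ω in f ⁻¹' B, H ω ∂π) :
    MemLp (ν.rnDeriv (π.map f)) 2 (π.map f) := by
  rw [memLp_map_measure_iff (ν.measurable_rnDeriv _).aestronglyMeasurable hf.aemeasurable]
  exact (hH.condExp one_le_two).ae_eq
    (rnDeriv_map_comp_ae_eq_condExp hf (hH.integrable one_le_two) hν).symm

theorem integral_rnDeriv_map_sq_le [IsFiniteMeasure π] (hf : Measurable f)
    (hH : MemLp H 2 π) (hν : ∀ B, MeasurableSet B → ν B = ∫ ω in f ⁻¹' B, H ω ∂π) :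
    ∫ y, ν.rnDeriv (π.map f) y ^ 2 ∂(π.map f) ≤ ∫ ω, H ω ^ 2 ∂π := by
  rw [integral_map hf.aemeasurable ((ν.measurable_rnDeriv _).pow_const 2).aestronglyMeasurable]
  calc ∫ ω, ν.rnDeriv (π.map f) (f ω) ^ 2 ∂π
      = ∫ ω, (π[H | MeasurableSpace.comap f ‹_›] ω) ^ 2 ∂π := integral_congr_ae <| by
        filter_upwards [rnDeriv_map_comp_ae_eq_condExp hf (hH.integrable one_le_two) hν]
          with ω hω
        rw [← hω, Function.comp_apply]
    _ ≤ ∫ ω, H ω ^ 2 ∂π := integral_sq_condExp_le hH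

end SignedMeasure

theorem Measure.setIntegral_snd_preimage_compProd {X Y : Type*} [MeasurableSpace X]
    [MeasurableSpace Y] (κ : Kernel X Y) [IsSFiniteKernel κ] (μ : Measure X) [SFinite μ]
    {h : X → ℝ} (hh : Integrable (fun z => h z.1) (μ ⊗ₘ κ)) {B : Set Y} (hB : MeasurableSet B) :
    ∫ z in Prod.snd ⁻¹' B, h z.1 ∂(μ ⊗ₘ κ) = ∫ x, (κ x).real B * h x ∂μ := by
  rw [← Set.univ_prod, Measure.setIntegral_compProd MeasurableSet.univ hB hh.integrableOn,
    Measure.restrict_univ]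
  simp only [setIntegral_const, smul_eq_mul]

end MeasureTheory

theorem fisher_metric_monotone_under_markov_kernel_general
    {X Y : Type*} [MeasurableSpace X] [MeasurableSpace Y]
    (κ : Kernel X Y) [IsMarkovKernel κ]
    (μ : Measure X) [IsProbabilityMeasure μ]
    (h : X → ℝ) (hL2 : MemLp h 2 μ)
    (ν' : SignedMeasure Y)
    (hν' : ∀ B : Set Y, MeasurableSet B →
      ν' B = ∫ x, ((κ x) B).toReal * h x ∂μ) :
    ν' ≪ᵥ (μ.bind (fun x => κ x)).toENNRealVectorMeasure ∧
    MemLp (ν'.rnDeriv (μ.bind (fun x => κ x))) 2 (μ.bind (fun x => κ x)) ∧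
    ∫ y, (ν'.rnDeriv (μ.bind (fun x => κ x)) y) ^ 2 ∂(μ.bind (fun x => κ x))
      ≤ ∫ x, (h x) ^ 2 ∂μ := by
  have hsnd : (μ ⊗ₘ κ).map Prod.snd = μ.bind (fun x => κ x) := Measure.snd_compProd μ κ
  have hfst : MeasurePreserving Prod.fst (μ ⊗ₘ κ) μ := ⟨measurable_fst, Measure.fst_compProd μ κ⟩
  have hH : MemLp (fun z => h z.1) 2 (μ ⊗ₘ κ) := hL2.comp_measurePreserving hfst
  have hν : ∀ B, MeasurableSet B → ν' B = ∫ z in Prod.snd ⁻¹' B, h z.1 ∂(μ ⊗ₘ κ) :=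
    fun B hB => by
      rw [hν' B hB, Measure.setIntegral_snd_preimage_compProd κ μ (hH.integrable one_le_two) hB]
      rfl
  have hsq : ∫ z, h z.1 ^ 2 ∂(μ ⊗ₘ κ) = ∫ x, h x ^ 2 ∂μ := by
    rw [← integral_map (f := fun x => h x ^ 2) measurable_fst.aemeasurable
      (by rw [hfst.map_eq]; exact hL2.1.pow 2), hfst.map_eq]
  rw [← hsnd]
  exact ⟨SignedMeasure.absolutelyContinuous_map_of_setIntegral_preimage measurable_snd hν,
    SignedMeasure.memLp_rnDeriv_map measurable_snd hH hν,
    (SignedMeasure.integral_rnDeriv_map_sq_le measurable_snd hH hν).trans_eq hsq⟩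

/-- Monotonicity of the Fisher metric under probabilistic morphisms: let `κ` be a Markov
kernel from `X` to `Y`, `μ` a probability measure on `X`, and `h ∈ L²(X, μ)`. Let
`μ' = T_*μ` be the probability measure `B ↦ ∫ κ x B dμ` (i.e. `μ.bind κ`), and let `ν'` be
the finite signed measure `B ↦ ∫ κ x B · h x dμ` (i.e. `T_*(h μ)`). Then `ν' ≪ μ'`, its
Radon–Nikodym derivative `g = dν'/dμ'` lies in `L²(Y, μ')`, and `∫ g² dμ' ≤ ∫ h² dμ`. -/
theorem fisher_metric_monotone_under_markov_kernel
    {X Y : Type*} [MeasurableSpace X] [MeasurableSpace Y]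
    (κ : Kernel X Y) [IsMarkovKernel κ]
    (μ : Measure X) [IsProbabilityMeasure μ]
    (h : X → ℝ) (hmeas : Measurable h) (hL2 : MemLp h 2 μ)
    (ν' : SignedMeasure Y)
    (hν' : ∀ B : Set Y, MeasurableSet B →
      ν' B = ∫ x, ((κ x) B).toReal * h x ∂μ) :
    ν' ≪ᵥ (μ.bind (fun x => κ x)).toENNRealVectorMeasure ∧
    MemLp (ν'.rnDeriv (μ.bind (fun x => κ x))) 2 (μ.bind (fun x => κ x)) ∧
    ∫ y, (ν'.rnDeriv (μ.bind (fun x => κ x)) y) ^ 2 ∂(μ.bind (fun x => κ x))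
      ≤ ∫ x, (h x) ^ 2 ∂μ :=
  fisher_metric_monotone_under_markov_kernel_general κ μ h hL2 ν' hν'
end
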